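/- Let s ∈ ℕ, n ∈ ℕ, and let f ∈ C^s(ℝ) be such that for each k = 0, 1, …, s the derivative f^{(k)} is either bounded and continuous or uniformly continuous on ℝ. Then for every θ > 0 and every k = 0, 1, …, s: (i) ω((A_n(f))^{(k)}, θ) ≤ ω(f^{(k)}, θ); (ii) ω((A_n^*(f))^{(k)}, θ) ≤ ω(f^{(k)}, θ); (iii) ω((Ā_n(f))^{(k)}, θ) ≤ ω(f^{(k)}, θ). Moreover, in each case, if f^{(k)} is uniformly continuous then the corresponding k-th derivative of the operator image is uniformly continuous. -/

import Mathlib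

open MeasureTheory Real Filter

noncomputable def nu (B q β x : ℝ) : ℝ := 1 / (1 + q * B ^ (-(β * x)))

noncomputable def G (B q β x : ℝ) : ℝ := (nu B q β (x + 1) - nu B q β (x - 1)) / 2

noncomputable def Psi (B q β x : ℝ) : ℝ := (G B q β x + G B (1 / q) β x) / 2

noncomputable def modCont (f : ℝ → ℝ) (θ : ℝ) : ℝ :=
  sSup {d : ℝ | ∃ x y : ℝ, |x - y| ≤ θ ∧ d = |f x - f y|}

noncomputable def supNorm (f : ℝ → ℝ) : ℝ := ⨆ x : ℝ, |f x|

noncomputable def opA (B q β : ℝ) (n : ℕ) (f : ℝ → ℝ) (x : ℝ) : ℝ :=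
  ∫ v : ℝ, f (v / n) * Psi B q β (n * x - v)

noncomputable def opAStar (B q β : ℝ) (n : ℕ) (f : ℝ → ℝ) (x : ℝ) : ℝ :=
  (n : ℝ) * ∫ v : ℝ, (∫ h in (v / n)..((v + 1) / n), f h) * Psi B q β (n * x - v)

noncomputable def opABar (B q β : ℝ) (r : ℕ) (w : ℕ → ℝ) (n : ℕ) (f : ℝ → ℝ) (x : ℝ) : ℝ :=
  ∫ v : ℝ, (∑ s ∈ Finset.Icc 1 r, w s * f (v / n + (s : ℝ) / ((n : ℝ) * (r : ℝ)))) *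
    Psi B q β (n * x - v)

lemma chain_bound {g : ℝ → ℝ} {δ ε : ℝ} (hδ : 0 < δ) (hε : 0 ≤ ε)
    (h : ∀ u v : ℝ, |u - v| ≤ δ → |g u - g v| ≤ ε) :
    ∀ (N : ℕ) (x y : ℝ), |x - y| ≤ N * δ → |g x - g y| ≤ N * ε := by
  intro N
  induction N with
  | zero =>
    intro x y h0
    simp only [Nat.cast_zero, zero_mul] at h0 ⊢
    rw [sub_eq_zero.mp (abs_nonpos_iff.mp h0)]
    simp
  | succ N ih =>
    have key : ∀ a b : ℝ, a ≤ b → |a - b| ≤ (N + 1 : ℕ) * δ → |g a - g b| ≤ (N + 1 : ℕ) * ε := by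
      intro a b hab habd
      have hba : b - a ≤ (N + 1) * δ := by
        rw [abs_sub_comm, abs_of_nonneg (by linarith)] at habd
        push_cast at habd; linarith
      set z := max a (b - δ) with hz
      have hz0 : a ≤ z := le_max_left _ _
      have hz1 : |z - b| ≤ δ := by
        rw [abs_le]
        refine ⟨by have := le_max_right a (b - δ); linarith, ?_⟩
        have : z ≤ b := max_le hab (by linarith)
        linarith
      have hz2 : |a - z| ≤ N * δ := by
        have hNδ : (0:ℝ) ≤ N * δ := by positivity
        rw [abs_le]
        have hub : z ≤ a + N * δ := max_le (by linarith) (by linarith)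
        exact ⟨by linarith, by linarith⟩
      calc |g a - g b| ≤ |g a - g z| + |g z - g b| := abs_sub_le _ _ _
        _ ≤ N * ε + ε := add_le_add (ih a z hz2) (h z b hz1)
        _ = (N + 1 : ℕ) * ε := by push_cast; ring
    intro x y hxy
    rcases le_total x y with h' | h'
    · exact key x y h' hxy
    · rw [abs_sub_comm] at hxy ⊢
      exact key y x h' hxy

lemma uc_step {g : ℝ → ℝ} (hg : UniformContinuous g) :
    ∃ δ : ℝ, 0 < δ ∧ ∀ u v : ℝ, |u - v| ≤ δ → |g u - g v| ≤ 1 := by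
  obtain ⟨δ, hδ, hδ'⟩ := Metric.uniformContinuous_iff.mp hg 1 one_pos
  refine ⟨δ / 2, by linarith, fun u v huv => ?_⟩
  have := hδ' (a := u) (b := v) (by rw [Real.dist_eq]; linarith)
  rw [Real.dist_eq] at this; linarith

lemma uc_linear_growth {g : ℝ → ℝ} (hg : UniformContinuous g) :
    ∃ a b : ℝ, 0 ≤ a ∧ 0 ≤ b ∧ ∀ y, |g y| ≤ a + b * |y| := by
  obtain ⟨δ, hδ, h⟩ := uc_step hg
  refine ⟨|g 0| + 1, 1 / δ, by positivity, by positivity, fun y => ?_⟩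
  set N := Nat.ceil (|y| / δ) with hN
  have h1 : |y - 0| ≤ N * δ := by
    rw [sub_zero]
    calc |y| = |y| / δ * δ := by field_simp
      _ ≤ N * δ := mul_le_mul_of_nonneg_right (Nat.le_ceil _) hδ.le
  have h2 := chain_bound hδ zero_le_one h N y 0 h1
  have h3 : (N : ℝ) ≤ |y| / δ + 1 := by
    have := Nat.ceil_lt_add_one (by positivity : (0:ℝ) ≤ |y| / δ)
    exact_mod_cast this.le
  have h4 : |g y| - |g 0| ≤ |g y - g 0| := abs_sub_abs_le_abs_sub _ _
  have h5 : |y| / δ = 1 / δ * |y| := by ring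
  rw [mul_one] at h2
  linarith

lemma modCont_nonneg (f : ℝ → ℝ) (θ : ℝ) : 0 ≤ modCont f θ :=
  Real.sSup_nonneg (by rintro d ⟨x, y, -, rfl⟩; exact abs_nonneg _)

lemma modCont_le {f : ℝ → ℝ} {θ A : ℝ} (hA : 0 ≤ A)
    (h : ∀ x y : ℝ, |x - y| ≤ θ → |f x - f y| ≤ A) : modCont f θ ≤ A :=
  Real.sSup_le (by rintro d ⟨x, y, hxy, rfl⟩; exact h x y hxy) hA

lemma modCont_const (c θ : ℝ) : modCont (fun _ => c) θ = 0 :=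
  le_antisymm (modCont_le le_rfl (by simp)) (modCont_nonneg _ _)

lemma bddAbove_modSet {f : ℝ → ℝ} {θ : ℝ}
    (hf : (∃ M, ∀ x, |f x| ≤ M) ∨ UniformContinuous f) :
    BddAbove {d : ℝ | ∃ x y : ℝ, |x - y| ≤ θ ∧ d = |f x - f y|} := by
  rcases hf with ⟨M, hM⟩ | hf
  · refine ⟨2 * M, ?_⟩
    rintro d ⟨x, y, -, rfl⟩
    have h1 : |f x - f y| ≤ |f x| + |f y| := by
      have := abs_sub_le (f x) 0 (f y); simpa using this
    have := hM x; have := hM y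
    linarith
  · obtain ⟨δ, hδ, h⟩ := uc_step hf
    set N := Nat.ceil (θ / δ) with hN
    refine ⟨(N : ℝ), ?_⟩
    rintro d ⟨x, y, hxy, rfl⟩
    have h1 : |x - y| ≤ N * δ := by
      rcases le_total θ 0 with h' | h'
      · have : x = y := sub_eq_zero.mp (abs_nonpos_iff.mp (hxy.trans h'))
        rw [this]; simp; positivity
      · calc |x - y| ≤ θ := hxy
          _ = θ / δ * δ := by field_simp
          _ ≤ N * δ := mul_le_mul_of_nonneg_right (Nat.le_ceil _) hδ.le
    simpa using chain_bound hδ zero_le_one h N x y h1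

lemma le_modCont {f : ℝ → ℝ} {θ : ℝ}
    (hf : (∃ M, ∀ x, |f x| ≤ M) ∨ UniformContinuous f) {x y : ℝ} (hxy : |x - y| ≤ θ) :
    |f x - f y| ≤ modCont f θ :=
  le_csSup (bddAbove_modSet hf) ⟨x, y, hxy, rfl⟩

lemma bounded_or_uc_linear_growth {g : ℝ → ℝ}
    (h : (∃ M, ∀ x, |g x| ≤ M) ∨ UniformContinuous g) :
    ∃ a b : ℝ, 0 ≤ a ∧ 0 ≤ b ∧ ∀ y, |g y| ≤ a + b * |y| := by
  rcases h with ⟨M, hM⟩ | h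
  · exact ⟨max M 0, 0, le_max_right _ _, le_rfl, fun y => by
      rw [zero_mul, add_zero]; exact (hM y).trans (le_max_left _ _)⟩
  · exact uc_linear_growth h

section PsiFacts

variable {B q β : ℝ}

lemma nu_eq (hB : 1 < B) (x : ℝ) :
    nu B q β x = 1 / (1 + q * Real.exp (-(β * Real.log B * x))) := by
  unfold nu
  rw [Real.rpow_def_of_pos (by linarith),
    show Real.log B * -(β * x) = -(β * Real.log B * x) by ring]

lemma nu_pos (hB : 1 < B) (hq : 0 < q) (x : ℝ) : 0 < nu B q β x := by
  rw [nu_eq hB]; positivity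

lemma nu_le_one (hB : 1 < B) (hq : 0 < q) (x : ℝ) : nu B q β x ≤ 1 := by
  rw [nu_eq hB]
  have h0 := Real.exp_pos (-(β * Real.log B * x))
  have h : (0:ℝ) < 1 + q * Real.exp (-(β * Real.log B * x)) := by positivity
  rw [div_le_one h]
  nlinarith

lemma nu_mono (hB : 1 < B) (hq : 0 < q) (hβ : 0 < β) {x y : ℝ} (hxy : x ≤ y) :
    nu B q β x ≤ nu B q β y := by
  have hc : 0 < β * Real.log B := mul_pos hβ (Real.log_pos hB)
  rw [nu_eq hB, nu_eq hB]
  have he : Real.exp (-(β * Real.log B * y)) ≤ Real.exp (-(β * Real.log B * x)) :=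
    Real.exp_le_exp.mpr (by nlinarith)
  have h : (0:ℝ) < 1 + q * Real.exp (-(β * Real.log B * y)) := by positivity
  apply one_div_le_one_div_of_le h
  nlinarith

lemma m0_bound (hB : 1 < B) (hq : 0 < q) (hβ : 0 < β) (x : ℝ) :
    |nu B q β x - Set.indicator (Set.Ioi (0:ℝ)) (fun _ => (1:ℝ)) x| ≤
      max q q⁻¹ * Real.exp (-(β * Real.log B * |x|)) := by
  set c := β * Real.log B with hcdef
  have hc : 0 < c := mul_pos hβ (Real.log_pos hB)
  rcases lt_or_ge 0 x with hx | hx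
  · rw [Set.indicator_of_mem (Set.mem_Ioi.mpr hx), abs_of_nonpos (by linarith [nu_le_one (β := β) hB hq x])]
    rw [abs_of_pos hx]
    set A := q * Real.exp (-(c * x)) with hA
    have hA0 : 0 < A := by positivity
    have e1 : -(nu B q β x - 1) = A / (1 + A) := by
      rw [nu_eq hB]; field_simp; rw [hA, hcdef]; ring
    rw [e1]
    calc A / (1 + A) ≤ A := div_le_self hA0.le (by linarith)
      _ = q * Real.exp (-(c * x)) := rfl
      _ ≤ max q q⁻¹ * Real.exp (-(c * x)) :=
        mul_le_mul_of_nonneg_right (le_max_left _ _) (Real.exp_pos _).le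
  · rw [Set.indicator_of_notMem (by simpa using hx), sub_zero,
      abs_of_pos (nu_pos hB hq x), abs_of_nonpos hx]
    set A := q * Real.exp (-(c * x)) with hA
    have hA0 : 0 < A := by positivity
    have e1 : nu B q β x ≤ 1 / A := by
      rw [nu_eq hB]
      exact one_div_le_one_div_of_le hA0 (by linarith)
    have e2 : 1 / A = q⁻¹ * Real.exp (-(c * -x)) := by
      rw [hA, show -(c * -x) = c * x by ring, Real.exp_neg]
      have := Real.exp_ne_zero (c * x)
      field_simp
    calc nu B q β x ≤ 1 / A := e1
      _ = q⁻¹ * Real.exp (-(c * -x)) := e2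
      _ ≤ max q q⁻¹ * Real.exp (-(c * -x)) :=
        mul_le_mul_of_nonneg_right (le_max_right _ _) (Real.exp_pos _).le

lemma integrable_exp_neg_abs {a : ℝ} (ha : 0 < a) :
    Integrable (fun x : ℝ => Real.exp (-(a * |x|))) := by
  have hmeas : Continuous fun x : ℝ => Real.exp (-(a * |x|)) := by continuity
  have hIoi : IntegrableOn (fun x : ℝ => Real.exp (-(a * |x|))) (Set.Ici 0) := by
    rw [integrableOn_Ici_iff_integrableOn_Ioi]
    apply (exp_neg_integrableOn_Ioi 0 ha).congr_fun _ measurableSet_Ioi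
    intro x hx
    show Real.exp (-a * x) = Real.exp (-(a * |x|))
    rw [abs_of_pos (Set.mem_Ioi.mp hx)]; ring_nf
  have hF : Integrable (Set.indicator (Set.Ici (0:ℝ)) fun x : ℝ => Real.exp (-(a * |x|))) := by
    rwa [integrable_indicator_iff measurableSet_Ici]
  have hFneg := hF.comp_neg
  have hIic : Integrable (Set.indicator (Set.Iic (0:ℝ)) fun x : ℝ => Real.exp (-(a * |x|))) := by
    apply hFneg.congr
    filter_upwards with x
    by_cases hx : x ≤ 0
    · rw [Set.indicator_of_mem (by simpa using hx : -x ∈ Set.Ici (0:ℝ)),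
        Set.indicator_of_mem (by simpa using hx), abs_neg]
    · rw [Set.indicator_of_notMem (by simpa using hx : ¬(-x ∈ Set.Ici (0:ℝ))),
        Set.indicator_of_notMem (by simpa using hx)]
  have hIic' : IntegrableOn (fun x : ℝ => Real.exp (-(a * |x|))) (Set.Iic 0) := by
    rwa [← integrable_indicator_iff measurableSet_Iic]
  have : IntegrableOn (fun x : ℝ => Real.exp (-(a * |x|))) (Set.Iic 0 ∪ Set.Ici 0) :=
    hIic'.union hIoi
  rwa [Set.Iic_union_Ici, integrableOn_univ] at this

end PsiFacts

section PsiFacts2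

variable {B q β : ℝ}

lemma continuous_nu (hB : 1 < B) (hq : 0 < q) : Continuous (nu B q β) := by
  have h : (nu B q β) = fun x => 1 / (1 + q * Real.exp (-(β * Real.log B * x))) :=
    funext (nu_eq hB)
  rw [h]
  apply Continuous.div continuous_const (by continuity)
  intro x; positivity

lemma continuous_G (hB : 1 < B) (hq : 0 < q) : Continuous (G B q β) := by
  unfold G
  exact (((continuous_nu hB hq).comp (by continuity)).sub
    ((continuous_nu hB hq).comp (by continuity))).div_const 2

lemma integrable_m0 (hB : 1 < B) (hq : 0 < q) (hβ : 0 < β) :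
    Integrable (fun x => nu B q β x - Set.indicator (Set.Ioi (0:ℝ)) (fun _ => (1:ℝ)) x) := by
  have hc : 0 < β * Real.log B := mul_pos hβ (Real.log_pos hB)
  apply Integrable.mono' ((integrable_exp_neg_abs hc).const_mul (max q q⁻¹))
  · exact ((continuous_nu hB hq).aestronglyMeasurable).sub
      ((measurable_const.indicator measurableSet_Ioi).aestronglyMeasurable)
  · filter_upwards with x
    exact m0_bound hB hq hβ x

lemma G_eq (x : ℝ) : G B q β x =
    ((nu B q β (x+1) - Set.indicator (Set.Ioi (0:ℝ)) (fun _ => (1:ℝ)) (x+1)) -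
      (nu B q β (x-1) - Set.indicator (Set.Ioi (0:ℝ)) (fun _ => (1:ℝ)) (x-1)) +
      Set.indicator (Set.Ioc (-1:ℝ) 1) (fun _ => (1:ℝ)) x) / 2 := by
  have key : Set.indicator (Set.Ioi (0:ℝ)) (fun _ => (1:ℝ)) (x+1) -
      Set.indicator (Set.Ioi (0:ℝ)) (fun _ => (1:ℝ)) (x-1) =
      Set.indicator (Set.Ioc (-1:ℝ) 1) (fun _ => (1:ℝ)) x := by
    by_cases h1 : -1 < x
    · by_cases h2 : x ≤ 1
      · rw [Set.indicator_of_mem (Set.mem_Ioi.mpr (show (0:ℝ) < x + 1 by linarith)),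
          Set.indicator_of_notMem (show x - 1 ∉ Set.Ioi (0:ℝ) by
            intro hmem; rw [Set.mem_Ioi] at hmem; linarith),
          Set.indicator_of_mem (Set.mem_Ioc.mpr ⟨h1, h2⟩)]
        norm_num
      · push_neg at h2
        rw [Set.indicator_of_mem (Set.mem_Ioi.mpr (show (0:ℝ) < x + 1 by linarith)),
          Set.indicator_of_mem (Set.mem_Ioi.mpr (show (0:ℝ) < x - 1 by linarith)),
          Set.indicator_of_notMem (show x ∉ Set.Ioc (-1:ℝ) 1 by
            intro hmem; rw [Set.mem_Ioc] at hmem; linarith [hmem.2])]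
        norm_num
    · push_neg at h1
      rw [Set.indicator_of_notMem (show x + 1 ∉ Set.Ioi (0:ℝ) by
          intro hmem; rw [Set.mem_Ioi] at hmem; linarith),
        Set.indicator_of_notMem (show x - 1 ∉ Set.Ioi (0:ℝ) by
          intro hmem; rw [Set.mem_Ioi] at hmem; linarith),
        Set.indicator_of_notMem (show x ∉ Set.Ioc (-1:ℝ) 1 by
          intro hmem; rw [Set.mem_Ioc] at hmem; linarith [hmem.1])]
      norm_num
  unfold G
  rw [← key]
  ring

lemma integrable_G (hB : 1 < B) (hq : 0 < q) (hβ : 0 < β) : Integrable (G B q β) := by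
  have hm0 := integrable_m0 hB hq hβ (B := B)
  have hA : Integrable (fun x : ℝ =>
      (nu B q β (x+1) - Set.indicator (Set.Ioi (0:ℝ)) (fun _ => (1:ℝ)) (x+1)) -
      (nu B q β (x-1) - Set.indicator (Set.Ioi (0:ℝ)) (fun _ => (1:ℝ)) (x-1))) :=
    (hm0.comp_add_right 1).sub (hm0.comp_sub_right 1)
  have hind : Integrable (fun x => Set.indicator (Set.Ioc (-1:ℝ) 1) (fun _ => (1:ℝ)) x) := by
    rw [integrable_indicator_iff measurableSet_Ioc]
    exact integrableOn_const measure_Ioc_lt_top.ne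
  have h : (G B q β) = fun x =>
      ((nu B q β (x+1) - Set.indicator (Set.Ioi (0:ℝ)) (fun _ => (1:ℝ)) (x+1)) -
      (nu B q β (x-1) - Set.indicator (Set.Ioi (0:ℝ)) (fun _ => (1:ℝ)) (x-1)) +
      Set.indicator (Set.Ioc (-1:ℝ) 1) (fun _ => (1:ℝ)) x) / 2 := funext G_eq
  rw [h]
  exact (hA.add hind).div_const 2

lemma integral_G (hB : 1 < B) (hq : 0 < q) (hβ : 0 < β) : ∫ x, G B q β x = 1 := by
  have hm0 := integrable_m0 hB hq hβ (B := B)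
  have h1i : Integrable (fun x : ℝ =>
      nu B q β (x+1) - Set.indicator (Set.Ioi (0:ℝ)) (fun _ => (1:ℝ)) (x+1)) :=
    hm0.comp_add_right 1
  have h2i : Integrable (fun x : ℝ =>
      nu B q β (x-1) - Set.indicator (Set.Ioi (0:ℝ)) (fun _ => (1:ℝ)) (x-1)) :=
    hm0.comp_sub_right 1
  have hA : Integrable (fun x : ℝ =>
      (nu B q β (x+1) - Set.indicator (Set.Ioi (0:ℝ)) (fun _ => (1:ℝ)) (x+1)) -
      (nu B q β (x-1) - Set.indicator (Set.Ioi (0:ℝ)) (fun _ => (1:ℝ)) (x-1))) :=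
    h1i.sub h2i
  have hind : Integrable (fun x => Set.indicator (Set.Ioc (-1:ℝ) 1) (fun _ => (1:ℝ)) x) := by
    rw [integrable_indicator_iff measurableSet_Ioc]
    exact integrableOn_const measure_Ioc_lt_top.ne
  have h : (G B q β) = fun x =>
      ((nu B q β (x+1) - Set.indicator (Set.Ioi (0:ℝ)) (fun _ => (1:ℝ)) (x+1)) -
      (nu B q β (x-1) - Set.indicator (Set.Ioi (0:ℝ)) (fun _ => (1:ℝ)) (x-1)) +
      Set.indicator (Set.Ioc (-1:ℝ) 1) (fun _ => (1:ℝ)) x) / 2 := funext G_eq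
  rw [h, integral_div, integral_add hA hind, integral_sub h1i h2i]
  have e1 : ∫ x : ℝ, (fun y => nu B q β y - Set.indicator (Set.Ioi (0:ℝ)) (fun _ => (1:ℝ)) y) (x + 1)
      = ∫ x : ℝ, (fun y => nu B q β y - Set.indicator (Set.Ioi (0:ℝ)) (fun _ => (1:ℝ)) y) x :=
    integral_add_right_eq_self
      (fun y => nu B q β y - Set.indicator (Set.Ioi (0:ℝ)) (fun _ => (1:ℝ)) y) (1:ℝ)
  have e2 : ∫ x : ℝ, (fun y => nu B q β y - Set.indicator (Set.Ioi (0:ℝ)) (fun _ => (1:ℝ)) y) (x - 1)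
      = ∫ x : ℝ, (fun y => nu B q β y - Set.indicator (Set.Ioi (0:ℝ)) (fun _ => (1:ℝ)) y) x :=
    integral_sub_right_eq_self
      (fun y => nu B q β y - Set.indicator (Set.Ioi (0:ℝ)) (fun _ => (1:ℝ)) y) (1:ℝ)
  simp only at e1 e2
  rw [e1, e2]
  have e3 : ∫ x : ℝ, Set.indicator (Set.Ioc (-1:ℝ) 1) (fun _ => (1:ℝ)) x = 2 := by
    rw [MeasureTheory.integral_indicator_const _ measurableSet_Ioc]
    rw [Real.volume_real_Ioc]
    norm_num
  rw [e3]
  ring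

lemma G_nonneg (hB : 1 < B) (hq : 0 < q) (hβ : 0 < β) (x : ℝ) : 0 ≤ G B q β x := by
  unfold G
  have := nu_mono hB hq hβ (show x - 1 ≤ x + 1 by linarith)
  linarith

end PsiFacts2

section PsiFacts3

variable {B q β : ℝ}

lemma G_decay (hB : 1 < B) (hq : 0 < q) (hβ : 0 < β) (x : ℝ) :
    G B q β x ≤ (2 * max q q⁻¹ + 1) * Real.exp (β * Real.log B) *
      Real.exp (-(β * Real.log B * |x|)) := by
  set c := β * Real.log B with hcdef
  have hc : 0 < c := mul_pos hβ (Real.log_pos hB)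
  set K := max q q⁻¹ with hKdef
  have hK : 0 < K := lt_of_lt_of_le hq (le_max_left _ _)
  have b1 := m0_bound hB hq hβ (x + 1)
  have b2 := m0_bound hB hq hβ (x - 1)
  set E := Real.exp (-(c * |x|)) with hEdef
  have hE : 0 < E := Real.exp_pos _
  have d1 : Real.exp (-(c * |x + 1|)) ≤ Real.exp c * E := by
    rw [hEdef, ← Real.exp_add]
    apply Real.exp_le_exp.mpr
    have h1 : |x| ≤ |x + 1| + 1 := by
      calc |x| = |(x + 1) + (-1)| := by ring_nf
        _ ≤ |x + 1| + |(-1:ℝ)| := abs_add_le _ _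
        _ = |x + 1| + 1 := by norm_num
    nlinarith
  have d2 : Real.exp (-(c * |x - 1|)) ≤ Real.exp c * E := by
    rw [hEdef, ← Real.exp_add]
    apply Real.exp_le_exp.mpr
    have h1 : |x| ≤ |x - 1| + 1 := by
      calc |x| = |(x - 1) + 1| := by ring_nf
        _ ≤ |x - 1| + |(1:ℝ)| := abs_add_le _ _
        _ = |x - 1| + 1 := by norm_num
    nlinarith
  have dχ : Set.indicator (Set.Ioc (-1:ℝ) 1) (fun _ => (1:ℝ)) x ≤ Real.exp c * E := by
    by_cases h : x ∈ Set.Ioc (-1:ℝ) 1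
    · rw [Set.indicator_of_mem h, hEdef, ← Real.exp_add]
      have hx1 : |x| ≤ 1 := abs_le.mpr ⟨by linarith [h.1], h.2⟩
      calc (1:ℝ) = Real.exp 0 := by simp
        _ ≤ _ := Real.exp_le_exp.mpr (by nlinarith)
    · rw [Set.indicator_of_notMem h]
      positivity
  have a1 : nu B q β (x+1) - Set.indicator (Set.Ioi (0:ℝ)) (fun _ => (1:ℝ)) (x+1) ≤
      K * Real.exp (-(c * |x + 1|)) := (le_abs_self _).trans b1
  have a2 : -(nu B q β (x-1) - Set.indicator (Set.Ioi (0:ℝ)) (fun _ => (1:ℝ)) (x-1)) ≤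
      K * Real.exp (-(c * |x - 1|)) := (neg_le_abs _).trans b2
  rw [G_eq x]
  have hKE1 : K * Real.exp (-(c * |x + 1|)) ≤ K * (Real.exp c * E) :=
    mul_le_mul_of_nonneg_left d1 hK.le
  have hKE2 : K * Real.exp (-(c * |x - 1|)) ≤ K * (Real.exp c * E) :=
    mul_le_mul_of_nonneg_left d2 hK.le
  have hpos : 0 < Real.exp c * E := by positivity
  nlinarith [hpos]

lemma integrable_abs_mul_G (hB : 1 < B) (hq : 0 < q) (hβ : 0 < β) :
    Integrable (fun t : ℝ => |t| * G B q β t) := by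
  set c := β * Real.log B with hcdef
  have hc : 0 < c := mul_pos hβ (Real.log_pos hB)
  set CK := (2 * max q q⁻¹ + 1) * Real.exp c with hCKdef
  have hCK : 0 < CK := by positivity
  apply Integrable.mono' ((integrable_exp_neg_abs (half_pos hc)).const_mul (CK * (2 / c)))
  · exact (continuous_abs.mul (continuous_G hB hq)).aestronglyMeasurable
  · filter_upwards with t
    have hGn := G_nonneg hB hq hβ t
    have habs : ‖|t| * G B q β t‖ = |t| * G B q β t :=
      Real.norm_of_nonneg (mul_nonneg (abs_nonneg _) hGn)
    rw [habs]
    have step1 : |t| * G B q β t ≤ |t| * (CK * Real.exp (-(c * |t|))) :=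
      mul_le_mul_of_nonneg_left (G_decay hB hq hβ t) (abs_nonneg _)
    have step2 : |t| ≤ 2 / c * Real.exp (c / 2 * |t|) := by
      have h1 : c / 2 * |t| ≤ Real.exp (c / 2 * |t|) := by
        have := Real.add_one_le_exp (c / 2 * |t|)
        linarith
      calc |t| = 2 / c * (c / 2 * |t|) := by field_simp
        _ ≤ 2 / c * Real.exp (c / 2 * |t|) :=
          mul_le_mul_of_nonneg_left h1 (by positivity)
    have step3 : Real.exp (c / 2 * |t|) * Real.exp (-(c * |t|)) = Real.exp (-(c / 2 * |t|)) := by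
      rw [← Real.exp_add]
      congr 1
      ring
    calc |t| * G B q β t ≤ |t| * (CK * Real.exp (-(c * |t|))) := step1
      _ ≤ (2 / c * Real.exp (c / 2 * |t|)) * (CK * Real.exp (-(c * |t|))) :=
        mul_le_mul_of_nonneg_right step2 (by positivity)
      _ = CK * (2 / c) * (Real.exp (c / 2 * |t|) * Real.exp (-(c * |t|))) := by ring
      _ = CK * (2 / c) * Real.exp (-(c / 2 * |t|)) := by rw [step3]

lemma continuous_Psi (hB : 1 < B) (hq : 0 < q) : Continuous (Psi B q β) := by
  unfold Psi
  exact ((continuous_G hB hq).add (continuous_G hB (by positivity))).div_const 2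

lemma Psi_nonneg (hB : 1 < B) (hq : 0 < q) (hβ : 0 < β) (x : ℝ) : 0 ≤ Psi B q β x := by
  unfold Psi
  have h1 := G_nonneg hB hq hβ x
  have h2 := G_nonneg hB (show 0 < 1/q by positivity) hβ x
  linarith

lemma integrable_Psi (hB : 1 < B) (hq : 0 < q) (hβ : 0 < β) : Integrable (Psi B q β) := by
  unfold Psi
  exact ((integrable_G hB hq hβ).add (integrable_G hB (by positivity) hβ)).div_const 2

lemma integral_Psi (hB : 1 < B) (hq : 0 < q) (hβ : 0 < β) : ∫ x, Psi B q β x = 1 := by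
  unfold Psi
  rw [integral_div, integral_add (integrable_G hB hq hβ) (integrable_G hB (by positivity) hβ),
    integral_G hB hq hβ, integral_G hB (by positivity) hβ]
  norm_num

lemma integrable_abs_mul_Psi (hB : 1 < B) (hq : 0 < q) (hβ : 0 < β) :
    Integrable (fun t : ℝ => |t| * Psi B q β t) := by
  have h : (fun t : ℝ => |t| * Psi B q β t) =
      fun t => (|t| * G B q β t + |t| * G B (1/q) β t) / 2 := by
    funext t; unfold Psi; ring
  rw [h]
  exact ((integrable_abs_mul_G hB hq hβ).add
    (integrable_abs_mul_G hB (by positivity) hβ)).div_const 2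

end PsiFacts3

section Conv

variable {B q β m : ℝ}

lemma conv_integrand_integrable (hB : 1 < B) (hq : 0 < q) (hβ : 0 < β) (hm : 1 ≤ m)
    {D : ℝ → ℝ} (hD : Continuous D) {a b : ℝ} (hb : 0 ≤ b)
    (hgrow : ∀ y, |D y| ≤ a + b * |y|) (x : ℝ) :
    Integrable (fun t : ℝ => D (x - t / m) * Psi B q β t) := by
  have hψ := integrable_Psi hB hq hβ
  have hψa := integrable_abs_mul_Psi hB hq hβ
  apply Integrable.mono' ((hψ.const_mul (a + b * |x|)).add (hψa.const_mul b))
  · exact ((hD.comp (by continuity)).mul (continuous_Psi hB hq)).aestronglyMeasurable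
  · filter_upwards with t
    have hψn := Psi_nonneg hB hq hβ t
    have h0 : |x - t / m| ≤ |x| + |t / m| := by
      have := abs_sub_le x 0 (t / m); simpa using this
    have h2 : |t / m| ≤ |t| := by
      rw [abs_div]
      rw [abs_of_pos (by linarith : (0:ℝ) < m)]
      exact div_le_self (abs_nonneg _) hm
    have hgb : |D (x - t / m)| ≤ a + b * |x| + b * |t| := by
      have := hgrow (x - t / m)
      nlinarith [abs_nonneg (x - t/m)]
    calc ‖D (x - t / m) * Psi B q β t‖ = |D (x - t / m)| * Psi B q β t := by
          rw [Real.norm_eq_abs, abs_mul, abs_of_nonneg hψn]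
      _ ≤ (a + b * |x| + b * |t|) * Psi B q β t := mul_le_mul_of_nonneg_right hgb hψn
      _ = (a + b * |x|) * Psi B q β t + b * (|t| * Psi B q β t) := by ring

lemma conv_modCont (hB : 1 < B) (hq : 0 < q) (hβ : 0 < β) (hm : 1 ≤ m)
    {D : ℝ → ℝ} (hD : Continuous D)
    (hbu : (∃ M, ∀ x, |D x| ≤ M) ∨ UniformContinuous D) {θ : ℝ} (hθ : 0 < θ) :
    modCont (fun x => ∫ t : ℝ, D (x - t / m) * Psi B q β t) θ ≤ modCont D θ := by
  obtain ⟨a, b, ha, hb, hgrow⟩ := bounded_or_uc_linear_growth hbu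
  have hψ := integrable_Psi hB hq hβ
  apply modCont_le (modCont_nonneg D θ)
  intro x y hxy
  have hix := conv_integrand_integrable hB hq hβ hm hD hb hgrow x
  have hiy := conv_integrand_integrable hB hq hβ hm hD hb hgrow y
  rw [← integral_sub hix hiy]
  calc |∫ t : ℝ, (D (x - t / m) * Psi B q β t - D (y - t / m) * Psi B q β t)|
      ≤ ∫ t : ℝ, |D (x - t / m) * Psi B q β t - D (y - t / m) * Psi B q β t| := by
        simpa [Real.norm_eq_abs] using
          norm_integral_le_integral_norm (μ := volume)
            (fun t : ℝ => D (x - t / m) * Psi B q β t - D (y - t / m) * Psi B q β t)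
    _ ≤ ∫ t : ℝ, modCont D θ * Psi B q β t := by
        apply integral_mono ((hix.sub hiy).abs) (hψ.const_mul _)
        intro t
        have hψn := Psi_nonneg hB hq hβ t
        have harg : |(x - t / m) - (y - t / m)| ≤ θ := by
          rw [show (x - t / m) - (y - t / m) = x - y by ring]; exact hxy
        have := le_modCont hbu harg
        calc |D (x - t / m) * Psi B q β t - D (y - t / m) * Psi B q β t|
            = |D (x - t / m) - D (y - t / m)| * Psi B q β t := by
              rw [← sub_mul, abs_mul, abs_of_nonneg hψn]
          _ ≤ modCont D θ * Psi B q β t := mul_le_mul_of_nonneg_right this hψn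
    _ = modCont D θ := by rw [integral_const_mul, integral_Psi hB hq hβ, mul_one]

lemma conv_uc (hB : 1 < B) (hq : 0 < q) (hβ : 0 < β) (hm : 1 ≤ m)
    {D : ℝ → ℝ} (hDuc : UniformContinuous D) :
    UniformContinuous (fun x => ∫ t : ℝ, D (x - t / m) * Psi B q β t) := by
  have hD : Continuous D := hDuc.continuous
  obtain ⟨a, b, ha, hb, hgrow⟩ := bounded_or_uc_linear_growth (Or.inr hDuc)
  have hψ := integrable_Psi hB hq hβ
  rw [Metric.uniformContinuous_iff]
  intro ε hε
  obtain ⟨δ, hδ, hδ'⟩ := Metric.uniformContinuous_iff.mp hDuc (ε / 2) (by linarith)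
  refine ⟨δ, hδ, ?_⟩
  intro x y hxy
  rw [Real.dist_eq] at hxy ⊢
  have hix := conv_integrand_integrable hB hq hβ hm hD hb hgrow x
  have hiy := conv_integrand_integrable hB hq hβ hm hD hb hgrow y
  rw [← integral_sub hix hiy]
  have hb1 : |∫ t : ℝ, (D (x - t / m) * Psi B q β t - D (y - t / m) * Psi B q β t)|
      ≤ ∫ t : ℝ, |D (x - t / m) * Psi B q β t - D (y - t / m) * Psi B q β t| := by
    simpa [Real.norm_eq_abs] using
      norm_integral_le_integral_norm (μ := volume)
        (fun t : ℝ => D (x - t / m) * Psi B q β t - D (y - t / m) * Psi B q β t)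
  have hb2 : ∫ t : ℝ, |D (x - t / m) * Psi B q β t - D (y - t / m) * Psi B q β t|
      ≤ ∫ t : ℝ, (ε / 2) * Psi B q β t := by
    apply integral_mono ((hix.sub hiy).abs) (hψ.const_mul _)
    intro t
    have hψn := Psi_nonneg hB hq hβ t
    have harg : dist (x - t / m) (y - t / m) < δ := by
      rw [Real.dist_eq, show (x - t / m) - (y - t / m) = x - y by ring]; exact hxy
    have hd := (hδ' harg).le
    rw [Real.dist_eq] at hd
    calc |D (x - t / m) * Psi B q β t - D (y - t / m) * Psi B q β t|
        = |D (x - t / m) - D (y - t / m)| * Psi B q β t := by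
          rw [← sub_mul, abs_mul, abs_of_nonneg hψn]
      _ ≤ (ε / 2) * Psi B q β t := mul_le_mul_of_nonneg_right hd hψn
  have hb3 : ∫ t : ℝ, (ε / 2) * Psi B q β t = ε / 2 := by
    rw [integral_const_mul, integral_Psi hB hq hβ, mul_one]
  linarith [hb1, hb2.trans_eq hb3]

lemma conv_iteratedDeriv (hB : 1 < B) (hq : 0 < q) (hβ : 0 < β) (hm : 1 ≤ m)
    (D : ℕ → ℝ → ℝ) (k : ℕ)
    (hD : ∀ j, j < k → ∀ y, HasDerivAt (D j) (D (j + 1) y) y)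
    (hcont : ∀ j, j ≤ k → Continuous (D j))
    (hbu : ∀ j, j ≤ k → (∃ M, ∀ x, |D j x| ≤ M) ∨ UniformContinuous (D j)) :
    ∀ j, j ≤ k → iteratedDeriv j (fun x => ∫ t : ℝ, D 0 (x - t / m) * Psi B q β t) =
      fun x => ∫ t : ℝ, D j (x - t / m) * Psi B q β t := by
  intro j
  induction j with
  | zero => intro _; rw [iteratedDeriv_zero]
  | succ j ih =>
    intro hjk
    have hj : j ≤ k := by omega
    rw [iteratedDeriv_succ, ih hj]
    funext x₀
    obtain ⟨a, b, ha, hb, hgrow⟩ := bounded_or_uc_linear_growth (hbu (j + 1) hjk)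
    obtain ⟨a0, b0, ha0, hb0, hgrow0⟩ := bounded_or_uc_linear_growth (hbu j hj)
    have hψ := integrable_Psi hB hq hβ
    have hψa := integrable_abs_mul_Psi hB hq hβ
    have hm0 : (0:ℝ) < m := by linarith
    have key := hasDerivAt_integral_of_dominated_loc_of_deriv_le (μ := volume)
      (F := fun x (t : ℝ) => D j (x - t / m) * Psi B q β t)
      (F' := fun x (t : ℝ) => D (j + 1) (x - t / m) * Psi B q β t)
      (x₀ := x₀) (s := Metric.ball x₀ 1)
      (bound := fun t : ℝ => (a + b * (|x₀| + 1)) * Psi B q β t + b * (|t| * Psi B q β t))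
      (Metric.ball_mem_nhds x₀ one_pos)
      (Filter.Eventually.of_forall fun x =>
        (((hcont j hj).comp (by continuity)).mul (continuous_Psi hB hq)).aestronglyMeasurable)
      (conv_integrand_integrable hB hq hβ hm (hcont j hj) hb0 hgrow0 x₀)
      ((((hcont (j + 1) hjk).comp (by continuity)).mul
        (continuous_Psi hB hq)).aestronglyMeasurable)
      (Filter.Eventually.of_forall fun t => ?_)
      (((hψ.const_mul _).add (hψa.const_mul b)))
      (Filter.Eventually.of_forall fun t => ?_)
    · exact key.2.deriv
    · -- bound
      intro x hx
      have hψn := Psi_nonneg hB hq hβ t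
      have hxd : |x - x₀| < 1 := by
        have := Metric.mem_ball.mp hx
        rwa [Real.dist_eq] at this
      have hxb : |x| ≤ |x₀| + 1 := by
        have := abs_sub_le x x₀ 0
        simp only [sub_zero] at this
        linarith [this]
      have h0 : |x - t / m| ≤ |x| + |t / m| := by
        have := abs_sub_le x 0 (t / m); simpa using this
      have h2 : |t / m| ≤ |t| := by
        rw [abs_div, abs_of_pos hm0]
        exact div_le_self (abs_nonneg _) hm
      have hgb : |D (j + 1) (x - t / m)| ≤ (a + b * (|x₀| + 1)) + b * |t| := by
        have := hgrow (x - t / m)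
        nlinarith
      calc ‖D (j + 1) (x - t / m) * Psi B q β t‖
          = |D (j + 1) (x - t / m)| * Psi B q β t := by
            rw [Real.norm_eq_abs, abs_mul, abs_of_nonneg hψn]
        _ ≤ ((a + b * (|x₀| + 1)) + b * |t|) * Psi B q β t :=
            mul_le_mul_of_nonneg_right hgb hψn
        _ = (a + b * (|x₀| + 1)) * Psi B q β t + b * (|t| * Psi B q β t) := by ring
    · -- differentiability
      intro x hx
      have h1 := (hD j (by omega) (x - t / m)).comp x ((hasDerivAt_id x).sub_const (t / m))
      simp only [mul_one] at h1
      exact h1.mul_const (Psi B q β t)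

end Conv
section Glue

variable {B q β : ℝ}

lemma rep_cov (g : ℝ → ℝ) {m : ℝ} (hm : m ≠ 0) (x : ℝ) :
    ∫ v : ℝ, g (v / m) * Psi B q β (m * x - v) = ∫ t : ℝ, g (x - t / m) * Psi B q β t := by
  have h := integral_sub_left_eq_self (fun t : ℝ => g ((m * x - t) / m) * Psi B q β t)
    volume (m * x)
  calc ∫ v : ℝ, g (v / m) * Psi B q β (m * x - v)
      = ∫ v : ℝ, g ((m * x - (m * x - v)) / m) * Psi B q β (m * x - v) := by
        congr 1; funext v
        rw [show m * x - (m * x - v) = v by ring]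
    _ = ∫ t : ℝ, g ((m * x - t) / m) * Psi B q β t := h
    _ = ∫ t : ℝ, g (x - t / m) * Psi B q β t := by
        congr 1; funext t
        rw [show (m * x - t) / m = x - t / m by field_simp]

lemma iteratedDeriv_const_fun (k : ℕ) (C : ℝ) :
    ∃ C', iteratedDeriv k (fun _ : ℝ => C) = fun _ => C' := by
  induction k with
  | zero => exact ⟨C, iteratedDeriv_zero⟩
  | succ k ih =>
    obtain ⟨C', hC'⟩ := ih
    refine ⟨0, ?_⟩
    rw [iteratedDeriv_succ, hC']
    funext x
    exact deriv_const x C'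

end Glue

section Steklov

noncomputable def St (m : ℝ) (g : ℝ → ℝ) : ℝ → ℝ := fun y => m * ∫ u in y..(y + 1 / m), g u

lemma St_eq {m : ℝ} {g : ℝ → ℝ} (y : ℝ) :
    St m g y = m * ∫ u in (0:ℝ)..(1 / m), g (u + y) := by
  unfold St
  rw [intervalIntegral.integral_comp_add_right (fun u => g u) y, zero_add, add_comm (1 / m) y]

lemma St_sub_bound {m C : ℝ} (hm : 0 < m) {g : ℝ → ℝ} (hg : Continuous g) (x y : ℝ)
    (h : ∀ u, |g (u + x) - g (u + y)| ≤ C) : |St m g x - St m g y| ≤ C := by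
  have i1 : IntervalIntegrable (fun u => g (u + x)) volume 0 (1 / m) :=
    (hg.comp (by continuity)).intervalIntegrable _ _
  have i2 : IntervalIntegrable (fun u => g (u + y)) volume 0 (1 / m) :=
    (hg.comp (by continuity)).intervalIntegrable _ _
  rw [St_eq, St_eq, ← mul_sub, ← intervalIntegral.integral_sub i1 i2]
  have hb := intervalIntegral.norm_integral_le_of_norm_le_const
    (C := C) (f := fun u => g (u + x) - g (u + y)) (a := (0:ℝ)) (b := 1 / m)
    (fun u _ => by rw [Real.norm_eq_abs]; exact h u)
  rw [Real.norm_eq_abs] at hb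
  rw [abs_mul, abs_of_pos hm]
  have : |1 / m - 0| = 1 / m := by
    rw [sub_zero, abs_of_pos (by positivity)]
  rw [this] at hb
  calc m * |∫ u in (0:ℝ)..(1 / m), (g (u + x) - g (u + y))| ≤ m * (C * (1 / m)) :=
        mul_le_mul_of_nonneg_left hb hm.le
    _ = C := by field_simp

lemma St_bound {m M : ℝ} (hm : 0 < m) {g : ℝ → ℝ} (hg : Continuous g)
    (h : ∀ u, |g u| ≤ M) (y : ℝ) : |St m g y| ≤ M := by
  unfold St
  have hb := intervalIntegral.norm_integral_le_of_norm_le_const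
    (C := M) (f := g) (a := y) (b := y + 1 / m)
    (fun u _ => by rw [Real.norm_eq_abs]; exact h u)
  rw [Real.norm_eq_abs] at hb
  have : |y + 1 / m - y| = 1 / m := by
    rw [show y + 1 / m - y = 1 / m by ring, abs_of_pos (by positivity)]
  rw [this] at hb
  rw [abs_mul, abs_of_pos hm]
  calc m * |∫ u in y..(y + 1 / m), g u| ≤ m * (M * (1 / m)) :=
        mul_le_mul_of_nonneg_left hb hm.le
    _ = M := by field_simp

lemma St_cont {m : ℝ} {g : ℝ → ℝ} (hg : Continuous g) : Continuous (St m g) := by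
  have hI : ∀ z : ℝ, HasDerivAt (fun z => ∫ u in (0:ℝ)..z, g u) (g z) z := fun z =>
    intervalIntegral.integral_hasDerivAt_right (hg.intervalIntegrable (μ := volume) _ _)
      (hg.stronglyMeasurableAtFilter volume _) hg.continuousAt
  have hIc : Continuous (fun z => ∫ u in (0:ℝ)..z, g u) :=
    continuous_iff_continuousAt.mpr fun z => (hI z).continuousAt
  have h : St m g = fun y => m * ((fun z => ∫ u in (0:ℝ)..z, g u) (y + 1 / m) -
      (fun z => ∫ u in (0:ℝ)..z, g u) y) := by
    funext y
    unfold St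
    simp only
    congr 1
    have := intervalIntegral.integral_add_adjacent_intervals (μ := volume)
      (hg.intervalIntegrable 0 y) (hg.intervalIntegrable y (y + 1 / m))
    linarith
  rw [h]
  exact continuous_const.mul ((hIc.comp (by continuity)).sub hIc)

lemma St_hasDerivAt {m : ℝ} {g g' : ℝ → ℝ} (hg : Continuous g)
    (hg' : ∀ u, HasDerivAt g (g' u) u) (hg'c : Continuous g') (y : ℝ) :
    HasDerivAt (St m g) (St m g' y) y := by
  have hI : ∀ z : ℝ, HasDerivAt (fun z => ∫ u in (0:ℝ)..z, g u) (g z) z := fun z =>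
    intervalIntegral.integral_hasDerivAt_right (hg.intervalIntegrable (μ := volume) _ _)
      (hg.stronglyMeasurableAtFilter volume _) hg.continuousAt
  have h : St m g = fun y => m * ((fun z => ∫ u in (0:ℝ)..z, g u) (y + 1 / m) -
      (fun z => ∫ u in (0:ℝ)..z, g u) y) := by
    funext y
    unfold St
    simp only
    congr 1
    have := intervalIntegral.integral_add_adjacent_intervals (μ := volume)
      (hg.intervalIntegrable 0 y) (hg.intervalIntegrable y (y + 1 / m))
    linarith
  have hval : St m g' y = m * (g (y + 1 / m) - g y) := by
    unfold St
    congr 1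
    exact intervalIntegral.integral_eq_sub_of_hasDerivAt (fun u _ => hg' u)
      (hg'c.intervalIntegrable _ _)
  rw [h, hval]
  have h1 := ((hI (y + 1 / m)).comp y ((hasDerivAt_id y).add_const (1 / m)))
  simp only [mul_one] at h1
  exact (h1.sub (hI y)).const_mul m

end Steklov

section Steklov2

lemma St_uc {m : ℝ} (hm : 0 < m) {g : ℝ → ℝ} (hg : UniformContinuous g) :
    UniformContinuous (St m g) := by
  rw [Metric.uniformContinuous_iff]
  intro ε hε
  obtain ⟨δ, hδ, hδ'⟩ := Metric.uniformContinuous_iff.mp hg (ε / 2) (by linarith)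
  refine ⟨δ, hδ, ?_⟩
  intro x y hxy
  rw [Real.dist_eq] at hxy ⊢
  have hb := St_sub_bound hm hg.continuous x y (fun u => by
    have h1 : dist (u + x) (u + y) < δ := by
      rw [Real.dist_eq, show u + x - (u + y) = x - y by ring]; exact hxy
    have := hδ' h1
    rw [Real.dist_eq] at this
    exact this.le)
  linarith

lemma St_modCont {m θ : ℝ} (hm : 0 < m) {g : ℝ → ℝ} (hg : Continuous g)
    (hbu : (∃ M, ∀ x, |g x| ≤ M) ∨ UniformContinuous g) :
    modCont (St m g) θ ≤ modCont g θ := by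
  apply modCont_le (modCont_nonneg _ _)
  intro x y hxy
  exact St_sub_bound hm hg x y fun u =>
    le_modCont hbu (by rw [show u + x - (u + y) = x - y by ring]; exact hxy)

lemma St_bu {m : ℝ} (hm : 0 < m) {g : ℝ → ℝ} (hg : Continuous g)
    (hbu : (∃ M, ∀ x, |g x| ≤ M) ∨ UniformContinuous g) :
    (∃ M, ∀ x, |St m g x| ≤ M) ∨ UniformContinuous (St m g) := by
  rcases hbu with ⟨M, hM⟩ | h
  · exact Or.inl ⟨M, St_bound hm hg hM⟩
  · exact Or.inr (St_uc hm h)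

end Steklov2

section SumShift

noncomputable def SS (w : ℕ → ℝ) (r : ℕ) (cs : ℕ → ℝ) (g : ℝ → ℝ) : ℝ → ℝ :=
  fun y => ∑ s ∈ Finset.Icc 1 r, w s * g (y + cs s)

variable {r : ℕ} {w : ℕ → ℝ} {cs : ℕ → ℝ} {g : ℝ → ℝ}

lemma SS_sub_bound {C : ℝ}
    (hw : ∀ t ∈ Finset.Icc 1 r, 0 ≤ w t) (hw1 : ∑ t ∈ Finset.Icc 1 r, w t = 1)
    (x y : ℝ) (h : ∀ u : ℝ, |g (u + x) - g (u + y)| ≤ C) :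
    |SS w r cs g x - SS w r cs g y| ≤ C := by
  unfold SS
  rw [← Finset.sum_sub_distrib]
  calc |∑ s ∈ Finset.Icc 1 r, (w s * g (x + cs s) - w s * g (y + cs s))|
      ≤ ∑ s ∈ Finset.Icc 1 r, |w s * g (x + cs s) - w s * g (y + cs s)| :=
        Finset.abs_sum_le_sum_abs _ _
    _ ≤ ∑ s ∈ Finset.Icc 1 r, w s * C := by
        apply Finset.sum_le_sum
        intro s hs
        rw [← mul_sub, abs_mul, abs_of_nonneg (hw s hs)]
        apply mul_le_mul_of_nonneg_left _ (hw s hs)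
        rw [show x + cs s = cs s + x by ring, show y + cs s = cs s + y by ring]
        exact h (cs s)
    _ = C := by rw [← Finset.sum_mul, hw1, one_mul]

lemma SS_bound {M : ℝ}
    (hw : ∀ t ∈ Finset.Icc 1 r, 0 ≤ w t) (hw1 : ∑ t ∈ Finset.Icc 1 r, w t = 1)
    (h : ∀ u : ℝ, |g u| ≤ M) (y : ℝ) : |SS w r cs g y| ≤ M := by
  unfold SS
  calc |∑ s ∈ Finset.Icc 1 r, w s * g (y + cs s)|
      ≤ ∑ s ∈ Finset.Icc 1 r, |w s * g (y + cs s)| := Finset.abs_sum_le_sum_abs _ _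
    _ ≤ ∑ s ∈ Finset.Icc 1 r, w s * M := by
        apply Finset.sum_le_sum
        intro s hs
        rw [abs_mul, abs_of_nonneg (hw s hs)]
        exact mul_le_mul_of_nonneg_left (h _) (hw s hs)
    _ = M := by rw [← Finset.sum_mul, hw1, one_mul]

lemma SS_uc (hw : ∀ t ∈ Finset.Icc 1 r, 0 ≤ w t)
    (hw1 : ∑ t ∈ Finset.Icc 1 r, w t = 1) (hg : UniformContinuous g) :
    UniformContinuous (SS w r cs g) := by
  rw [Metric.uniformContinuous_iff]
  intro ε hε
  obtain ⟨δ, hδ, hδ'⟩ := Metric.uniformContinuous_iff.mp hg (ε / 2) (by linarith)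
  refine ⟨δ, hδ, ?_⟩
  intro x y hxy
  rw [Real.dist_eq] at hxy ⊢
  have hb := SS_sub_bound (cs := cs) (C := ε / 2) hw hw1 x y (fun u => by
    have h1 : dist (u + x) (u + y) < δ := by
      rw [Real.dist_eq, show u + x - (u + y) = x - y by ring]; exact hxy
    have := hδ' h1
    rw [Real.dist_eq] at this
    exact this.le)
  linarith

lemma SS_modCont {θ : ℝ} (hw : ∀ t ∈ Finset.Icc 1 r, 0 ≤ w t)
    (hw1 : ∑ t ∈ Finset.Icc 1 r, w t = 1)
    (hbu : (∃ M, ∀ x, |g x| ≤ M) ∨ UniformContinuous g) :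
    modCont (SS w r cs g) θ ≤ modCont g θ := by
  apply modCont_le (modCont_nonneg _ _)
  intro x y hxy
  exact SS_sub_bound hw hw1 x y fun u =>
    le_modCont hbu (by rw [show u + x - (u + y) = x - y by ring]; exact hxy)

lemma SS_bu (hw : ∀ t ∈ Finset.Icc 1 r, 0 ≤ w t)
    (hw1 : ∑ t ∈ Finset.Icc 1 r, w t = 1)
    (hbu : (∃ M, ∀ x, |g x| ≤ M) ∨ UniformContinuous g) :
    (∃ M, ∀ x, |SS w r cs g x| ≤ M) ∨ UniformContinuous (SS w r cs g) := by
  rcases hbu with ⟨M, hM⟩ | h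
  · exact Or.inl ⟨M, SS_bound hw hw1 hM⟩
  · exact Or.inr (SS_uc hw hw1 h)

lemma SS_cont (hg : Continuous g) : Continuous (SS w r cs g) := by
  unfold SS
  apply continuous_finset_sum
  intro s _
  exact continuous_const.mul (hg.comp (by continuity))

lemma SS_hasDerivAt {g' : ℝ → ℝ} (hg' : ∀ u, HasDerivAt g (g' u) u) (y : ℝ) :
    HasDerivAt (SS w r cs g) (SS w r cs g' y) y := by
  unfold SS
  apply HasDerivAt.fun_sum
  intro s _
  have h1 := (hg' (y + cs s)).comp y ((hasDerivAt_id y).add_const (cs s))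
  simp only [mul_one] at h1
  exact h1.const_mul (w s)

end SumShift

section Master

variable {B q β : ℝ}

lemma master (hB : 1 < B) (hq : 0 < q) (hβ : 0 < β) {m : ℝ} (hm : 1 ≤ m)
    (D : ℕ → ℝ → ℝ) (k : ℕ)
    (hD : ∀ j, j < k → ∀ y, HasDerivAt (D j) (D (j + 1) y) y)
    (hcont : ∀ j, j ≤ k → Continuous (D j))
    (hbu : ∀ j, j ≤ k → (∃ M, ∀ x, |D j x| ≤ M) ∨ UniformContinuous (D j)) :
    (∀ θ : ℝ, 0 < θ →
      modCont (iteratedDeriv k (fun x => ∫ t : ℝ, D 0 (x - t / m) * Psi B q β t)) θ ≤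
        modCont (D k) θ) ∧
    (UniformContinuous (D k) →
      UniformContinuous (iteratedDeriv k (fun x => ∫ t : ℝ, D 0 (x - t / m) * Psi B q β t))) := by
  have hrep := conv_iteratedDeriv hB hq hβ hm D k hD hcont hbu k le_rfl
  constructor
  · intro θ hθ
    rw [hrep]
    exact conv_modCont hB hq hβ hm (hcont k le_rfl) (hbu k le_rfl) hθ
  · intro huc
    rw [hrep]
    exact conv_uc hB hq hβ hm huc

end Master

/-- preservation of global smoothness for the derivatives of the images
under `A_n`, `A_n^*`, `Ā_n`. -/
theorem derivatives_global_smoothness (B q β : ℝ) (hB : 1 < B) (hq : 0 < q) (hβ : 0 < β)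
    (r : ℕ) (w : ℕ → ℝ) (hw : ∀ t ∈ Finset.Icc 1 r, 0 ≤ w t)
    (hw1 : ∑ t ∈ Finset.Icc 1 r, w t = 1)
    (s n : ℕ) (f : ℝ → ℝ) (hf : ContDiff ℝ (s : ℕ∞) f)
    (hbd : ∀ k : ℕ, k ≤ s →
      (Continuous (iteratedDeriv k f) ∧ ∃ M : ℝ, ∀ x : ℝ, |iteratedDeriv k f x| ≤ M) ∨
        UniformContinuous (iteratedDeriv k f)) :
    ∀ k : ℕ, k ≤ s →
      (∀ θ : ℝ, 0 < θ →
        modCont (iteratedDeriv k (opA B q β n f)) θ ≤ modCont (iteratedDeriv k f) θ ∧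
        modCont (iteratedDeriv k (opAStar B q β n f)) θ ≤ modCont (iteratedDeriv k f) θ ∧
        modCont (iteratedDeriv k (opABar B q β r w n f)) θ ≤ modCont (iteratedDeriv k f) θ) ∧
      (UniformContinuous (iteratedDeriv k f) →
        UniformContinuous (iteratedDeriv k (opA B q β n f)) ∧
        UniformContinuous (iteratedDeriv k (opAStar B q β n f)) ∧
        UniformContinuous (iteratedDeriv k (opABar B q β r w n f))) := by
  intro k hk
  have hbu : ∀ j, j ≤ s →
      (∃ M, ∀ x, |iteratedDeriv j f x| ≤ M) ∨ UniformContinuous (iteratedDeriv j f) := by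
    intro j hj
    rcases hbd j hj with ⟨_, hM⟩ | h
    · exact Or.inl hM
    · exact Or.inr h
  have hcont : ∀ j, j ≤ s → Continuous (iteratedDeriv j f) := by
    intro j hj
    rcases hbd j hj with ⟨h, _⟩ | h
    · exact h
    · exact h.continuous
  have hder : ∀ j, j < s → ∀ y, HasDerivAt (iteratedDeriv j f) (iteratedDeriv (j + 1) f y) y := by
    intro j hj y
    have hd : Differentiable ℝ (iteratedDeriv j f) :=
      hf.differentiable_iteratedDeriv j (by exact_mod_cast hj)
    rw [iteratedDeriv_succ]
    exact (hd y).hasDerivAt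
  rcases Nat.eq_zero_or_pos n with hn0 | hn0
  · subst hn0
    have hA : opA B q β 0 f = fun _ : ℝ => ∫ v : ℝ, f 0 * Psi B q β (-v) := by
      funext x; unfold opA; simp
    have hS : opAStar B q β 0 f = fun _ : ℝ => (0:ℝ) := by
      funext x; unfold opAStar; simp
    have hBa : opABar B q β r w 0 f =
        fun _ : ℝ => ∫ v : ℝ, (∑ t ∈ Finset.Icc 1 r, w t * f 0) * Psi B q β (-v) := by
      funext x; unfold opABar; simp
    obtain ⟨cA, hcA⟩ := iteratedDeriv_const_fun k (∫ v : ℝ, f 0 * Psi B q β (-v))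
    obtain ⟨cS, hcS⟩ := iteratedDeriv_const_fun k (0:ℝ)
    obtain ⟨cB, hcB⟩ :=
      iteratedDeriv_const_fun k (∫ v : ℝ, (∑ t ∈ Finset.Icc 1 r, w t * f 0) * Psi B q β (-v))
    refine ⟨fun θ hθ => ⟨?_, ?_, ?_⟩, fun huc => ⟨?_, ?_, ?_⟩⟩
    · rw [hA, hcA, modCont_const]; exact modCont_nonneg _ _
    · rw [hS, hcS, modCont_const]; exact modCont_nonneg _ _
    · rw [hBa, hcB, modCont_const]; exact modCont_nonneg _ _
    · rw [hA, hcA]; exact uniformContinuous_const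
    · rw [hS, hcS]; exact uniformContinuous_const
    · rw [hBa, hcB]; exact uniformContinuous_const
  · have hm1 : (1:ℝ) ≤ (n:ℝ) := by exact_mod_cast hn0
    have hmpos : (0:ℝ) < (n:ℝ) := by linarith
    have hmne : ((n:ℝ)) ≠ 0 := ne_of_gt hmpos
    -- opA
    have mA := master hB hq hβ hm1 (fun j => iteratedDeriv j f) k
      (fun j hj => hder j (lt_of_lt_of_le hj hk))
      (fun j hj => hcont j (le_trans hj hk))
      (fun j hj => hbu j (le_trans hj hk))
    have hArep : opA B q β n f =
        fun x => ∫ t : ℝ, iteratedDeriv 0 f (x - t / (n:ℝ)) * Psi B q β t := by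
      funext x; unfold opA
      rw [iteratedDeriv_zero]
      exact rep_cov f hmne x
    -- opAStar
    have mS := master hB hq hβ hm1 (fun j => St (n:ℝ) (iteratedDeriv j f)) k
      (fun j hj y => St_hasDerivAt (hcont j (le_trans (Nat.le_of_lt hj) hk))
        (hder j (lt_of_lt_of_le hj hk)) (hcont (j+1) (le_trans hj hk)) y)
      (fun j hj => St_cont (hcont j (le_trans hj hk)))
      (fun j hj => St_bu hmpos (hcont j (le_trans hj hk)) (hbu j (le_trans hj hk)))
    have hSrep : opAStar B q β n f =
        fun x => ∫ t : ℝ, St (n:ℝ) (iteratedDeriv 0 f) (x - t / (n:ℝ)) * Psi B q β t := by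
      funext x; unfold opAStar
      rw [iteratedDeriv_zero, ← integral_const_mul]
      have hint : ∀ v : ℝ, (n:ℝ) * ((∫ h in (v / (n:ℝ))..((v + 1) / (n:ℝ)), f h) *
          Psi B q β ((n:ℝ) * x - v)) = St (n:ℝ) f (v / (n:ℝ)) * Psi B q β ((n:ℝ) * x - v) := by
        intro v
        unfold St
        rw [show (v + 1) / (n:ℝ) = v / (n:ℝ) + 1 / (n:ℝ) by field_simp]
        ring
      calc ∫ v : ℝ, (n:ℝ) * ((∫ h in (v / (n:ℝ))..((v + 1) / (n:ℝ)), f h) *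
            Psi B q β ((n:ℝ) * x - v))
          = ∫ v : ℝ, St (n:ℝ) f (v / (n:ℝ)) * Psi B q β ((n:ℝ) * x - v) := by
            congr 1; funext v; exact hint v
        _ = ∫ t : ℝ, St (n:ℝ) f (x - t / (n:ℝ)) * Psi B q β t := rep_cov _ hmne x
    -- opABar
    set cs : ℕ → ℝ := fun t => (t : ℝ) / ((n:ℝ) * (r:ℝ)) with hcs
    have mB := master hB hq hβ hm1 (fun j => SS w r cs (iteratedDeriv j f)) k
      (fun j hj y => SS_hasDerivAt (hder j (lt_of_lt_of_le hj hk)) y)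
      (fun j hj => SS_cont (hcont j (le_trans hj hk)))
      (fun j hj => SS_bu hw hw1 (hbu j (le_trans hj hk)))
    have hBrep : opABar B q β r w n f =
        fun x => ∫ t : ℝ, SS w r cs (iteratedDeriv 0 f) (x - t / (n:ℝ)) * Psi B q β t := by
      funext x; unfold opABar
      rw [iteratedDeriv_zero]
      exact rep_cov (SS w r cs f) hmne x
    refine ⟨fun θ hθ => ⟨?_, ?_, ?_⟩, fun huc => ⟨?_, ?_, ?_⟩⟩
    · rw [hArep]; exact mA.1 θ hθ
    · rw [hSrep]
      exact (mS.1 θ hθ).trans (St_modCont hmpos (hcont k hk) (hbu k hk))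
    · rw [hBrep]
      exact (mB.1 θ hθ).trans (SS_modCont hw hw1 (hbu k hk))
    · rw [hArep]; exact mA.2 huc
    · rw [hSrep]; exact mS.2 (St_uc hmpos huc)
    · rw [hBrep]; exact mB.2 (SS_uc hw hw1 huc)
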